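/- arXiv:1907.01129 — 10 statements merged into one kernel-verified Lean document; each statement's English description precedes it below -/
import Mathlib

section
/- Consider the query vc ← R(x), S(x,y), R(y), where R is unary and S is binary, both endogenous. For every finite directed graph G = (V, E) with E nonempty, let D_G be the database in which the relation R equals V and the relation S equals E. Then D_G ⊨ vc, and the resilience ρ(vc, D_G) equals the minimum size of a vertex cover of G, i.e., of a set C ⊆ V such that every edge in E has at least one endpoint in C. -/
/-!
STATEMENT 0.
Query `vc ← R(x), S(x,y), R(y)` with `R` unary and `S` binary, both endogenous.
For a finite directed graph `G = (V, E)` with `E` nonempty, the database `D_G`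
has `R = V` and `S = E`.  Then `D_G ⊨ vc`, and its resilience (the minimum
total number of tuples `ΓR ⊆ V`, `ΓS ⊆ E` whose removal falsifies `vc`)
equals the minimum size of a vertex cover of `G`.
-/
theorem stmt_0 {α : Type} [DecidableEq α]
    (V : Finset α) (E : Finset (α × α))
    (hE : E.Nonempty)
    (hends : ∀ e ∈ E, e.1 ∈ V ∧ e.2 ∈ V) :
    (∃ x y, x ∈ V ∧ (x, y) ∈ E ∧ y ∈ V) ∧
    sInf {n : ℕ | ∃ (ΓR : Finset α) (ΓS : Finset (α × α)),
        ΓR ⊆ V ∧ ΓS ⊆ E ∧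
        (¬ ∃ x y, x ∈ V \ ΓR ∧ (x, y) ∈ E \ ΓS ∧ y ∈ V \ ΓR) ∧
        ΓR.card + ΓS.card = n} =
    sInf {n : ℕ | ∃ C : Finset α, C ⊆ V ∧
        (∀ e ∈ E, e.1 ∈ C ∨ e.2 ∈ C) ∧ C.card = n} := by
  obtain ⟨e, he⟩ := hE
  obtain ⟨h1, h2⟩ := hends e he
  refine ⟨⟨e.1, e.2, h1, by simpa using he, h2⟩, ?_⟩
  set Res := {n : ℕ | ∃ (ΓR : Finset α) (ΓS : Finset (α × α)),
        ΓR ⊆ V ∧ ΓS ⊆ E ∧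
        (¬ ∃ x y, x ∈ V \ ΓR ∧ (x, y) ∈ E \ ΓS ∧ y ∈ V \ ΓR) ∧
        ΓR.card + ΓS.card = n} with hRes
  set VC := {n : ℕ | ∃ C : Finset α, C ⊆ V ∧
        (∀ e ∈ E, e.1 ∈ C ∨ e.2 ∈ C) ∧ C.card = n} with hVC
  have hVCne : VC.Nonempty :=
    ⟨V.card, V, le_refl _, fun e he => Or.inl (hends e he).1, rfl⟩
  have hResne : Res.Nonempty := by
    refine ⟨V.card, V, ∅, le_refl _, Finset.empty_subset _, ?_, by simp⟩
    rintro ⟨x, y, hx, -, -⟩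
    simp at hx
  apply le_antisymm
  · -- from a vertex cover, build a contingency set
    obtain ⟨C, hCV, hcov, hcard⟩ := Nat.sInf_mem hVCne
    apply Nat.sInf_le
    refine ⟨C, ∅, hCV, Finset.empty_subset _, ?_, by simp [hcard]⟩
    rintro ⟨x, y, hx, hxy, hy⟩
    simp only [Finset.mem_sdiff] at hx hxy hy
    rcases hcov (x, y) hxy.1 with h | h
    · exact hx.2 h
    · exact hy.2 h
  · -- from a contingency set, build a vertex cover
    obtain ⟨ΓR, ΓS, hRV, hSE, hfals, hcard⟩ := Nat.sInf_mem hResne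
    have hle : sInf VC ≤ (ΓR ∪ ΓS.image Prod.fst).card := by
      apply Nat.sInf_le
      refine ⟨ΓR ∪ ΓS.image Prod.fst, ?_, ?_, rfl⟩
      · intro a ha
        rcases Finset.mem_union.mp ha with h | h
        · exact hRV h
        · obtain ⟨p, hp, rfl⟩ := Finset.mem_image.mp h
          exact (hends p (hSE hp)).1
      · intro f hf
        by_cases hfs : f ∈ ΓS
        · exact Or.inl (Finset.mem_union_right _
            (Finset.mem_image.mpr ⟨f, hfs, rfl⟩))
        · by_contra hcon
          push_neg at hcon
          obtain ⟨hc1, hc2⟩ := hcon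
          have h1 : f.1 ∉ ΓR := fun h => hc1 (Finset.mem_union_left _ h)
          have h2 : f.2 ∉ ΓR := fun h => hc2 (Finset.mem_union_left _ h)
          exact hfals ⟨f.1, f.2, Finset.mem_sdiff.mpr ⟨(hends f hf).1, h1⟩,
            Finset.mem_sdiff.mpr ⟨by simpa using hf, hfs⟩,
            Finset.mem_sdiff.mpr ⟨(hends f hf).2, h2⟩⟩
    calc sInf VC ≤ (ΓR ∪ ΓS.image Prod.fst).card := hle
      _ ≤ ΓR.card + (ΓS.image Prod.fst).card := Finset.card_union_le _ _
      _ ≤ ΓR.card + ΓS.card := by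
          exact Nat.add_le_add_left (Finset.card_image_le) _
      _ = sInf Res := hcard
end

section
/- Consider the query q_conf^AC ← A(x), R(x,y), R(z,y), C(z), with A and C unary and R binary, all endogenous. For every database D with D ⊨ q_conf^AC, there exists a minimum-size contingency set for (q_conf^AC, D) that contains no R-tuples. -/
private lemma key_stmt2 {α : Type} [DecidableEq α]
    (A C : Finset α) (R : Finset (α × α)) :
    ∀ n (ΓA' ΓC' : Finset α) (ΓR' : Finset (α × α)), ΓR'.card ≤ n →
    (¬ ∃ x y z, x ∈ A \ ΓA' ∧ (x, y) ∈ R \ ΓR' ∧ (z, y) ∈ R \ ΓR' ∧ z ∈ C \ ΓC') →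
    ∃ ΓA ΓC : Finset α,
      (¬ ∃ x y z, x ∈ A \ ΓA ∧ (x, y) ∈ R ∧ (z, y) ∈ R ∧ z ∈ C \ ΓC) ∧
      ΓA.card + ΓC.card ≤ ΓA'.card + ΓR'.card + ΓC'.card := by
  intro n
  induction n with
  | zero =>
    intro ΓA' ΓC' ΓR' hcard hnc
    have hempty : ΓR' = ∅ := Finset.card_eq_zero.mp (Nat.le_zero.mp hcard)
    subst hempty
    refine ⟨ΓA', ΓC', ?_, by simp⟩
    simpa using hnc
  | succ n ih =>
    intro ΓA' ΓC' ΓR' hcard hnc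
    rcases eq_or_ne ΓR' ∅ with h | h
    · subst h
      refine ⟨ΓA', ΓC', by simpa using hnc, by simp⟩
    · obtain ⟨e, he⟩ := Finset.nonempty_iff_ne_empty.mpr h
      obtain ⟨u, v⟩ := e
      set ΓR'' := ΓR'.erase (u, v) with hR''
      have hcard'' : ΓR''.card ≤ n := by
        have h0 : ΓR''.card + 1 = ΓR'.card := by rw [hR'']; exact Finset.card_erase_add_one he
        omega
      have hpos : 1 ≤ ΓR'.card := Finset.card_pos.mpr ⟨_, he⟩
      by_cases h1 : ¬ ∃ x y z, x ∈ A \ insert u ΓA' ∧ (x, y) ∈ R \ ΓR'' ∧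
          (z, y) ∈ R \ ΓR'' ∧ z ∈ C \ ΓC'
      · obtain ⟨ΓA, ΓC, hnc2, hle⟩ := ih (insert u ΓA') ΓC' ΓR'' hcard'' h1
        refine ⟨ΓA, ΓC, hnc2, ?_⟩
        have h1 := Finset.card_insert_le u ΓA'
        have h2 : ΓR''.card + 1 = ΓR'.card := by rw [hR'']; exact Finset.card_erase_add_one he
        omega
      · push_neg at h1
        obtain ⟨x, y, z, hx, hxy, hzy, hz⟩ := h1
        -- extract: x ∈ A \ ΓA', x ≠ u, (x,y) ∈ R \ ΓR', z = u, y = v, u ∈ C \ ΓC'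
        have hxA : x ∈ A := (Finset.mem_sdiff.mp hx).1
        have hxne : x ≠ u ∧ x ∉ ΓA' := by
          have := (Finset.mem_sdiff.mp hx).2
          simp only [Finset.mem_insert, not_or] at this
          exact this
        have hxyR : (x, y) ∈ R \ ΓR' := by
          rcases Finset.mem_sdiff.mp hxy with ⟨hR, hnR⟩
          refine Finset.mem_sdiff.mpr ⟨hR, fun hc => hnR ?_⟩
          refine Finset.mem_erase.mpr ⟨?_, hc⟩
          intro heq
          exact hxne.1 (by simpa using congrArg Prod.fst heq)
        have hzv : z = u ∧ y = v := by
          rcases Finset.mem_sdiff.mp hzy with ⟨hR, hnR⟩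
          by_cases hzy' : (z, y) ∈ ΓR'
          · have : (z, y) = (u, v) := by
              by_contra hne
              exact hnR (Finset.mem_erase.mpr ⟨hne, hzy'⟩)
            exact ⟨congrArg Prod.fst this, congrArg Prod.snd this⟩
          · exact absurd ⟨x, y, z, ⟨Finset.mem_sdiff.mpr ⟨hxA, hxne.2⟩, hxyR,
              Finset.mem_sdiff.mpr ⟨hR, hzy'⟩, hz⟩⟩ hnc
        have huC : u ∈ C \ ΓC' := hzv.1 ▸ hz
        have hxv : (x, v) ∈ R \ ΓR' := hzv.2 ▸ hxyR
        -- now show the second modified set is a contingency set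
        have h2 : ¬ ∃ x y z, x ∈ A \ ΓA' ∧ (x, y) ∈ R \ ΓR'' ∧
            (z, y) ∈ R \ ΓR'' ∧ z ∈ C \ insert u ΓC' := by
          rintro ⟨x', y', z', hx', hxy', hzy', hz'⟩
          have hz'C : z' ∈ C := (Finset.mem_sdiff.mp hz').1
          have hz'ne : z' ≠ u ∧ z' ∉ ΓC' := by
            have := (Finset.mem_sdiff.mp hz').2
            simp only [Finset.mem_insert, not_or] at this
            exact this
          have hzyR' : (z', y') ∈ R \ ΓR' := by
            rcases Finset.mem_sdiff.mp hzy' with ⟨hR, hnR⟩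
            refine Finset.mem_sdiff.mpr ⟨hR, fun hc => hnR ?_⟩
            refine Finset.mem_erase.mpr ⟨?_, hc⟩
            intro heq
            exact hz'ne.1 (by simpa using congrArg Prod.fst heq)
          have hy'v : x' = u ∧ y' = v := by
            rcases Finset.mem_sdiff.mp hxy' with ⟨hR, hnR⟩
            by_cases hxy'' : (x', y') ∈ ΓR'
            · have : (x', y') = (u, v) := by
                by_contra hne
                exact hnR (Finset.mem_erase.mpr ⟨hne, hxy''⟩)
              exact ⟨congrArg Prod.fst this, congrArg Prod.snd this⟩
            · exact absurd ⟨x', y', z', ⟨hx', Finset.mem_sdiff.mpr ⟨hR, hxy''⟩,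
                hzyR', Finset.mem_sdiff.mpr ⟨hz'C, hz'ne.2⟩⟩⟩ hnc
          -- so (z', v) ∈ R \ ΓR', z' ∈ C \ ΓC'; together with x gives conflict
          exact hnc ⟨x, v, z', Finset.mem_sdiff.mpr ⟨hxA, hxne.2⟩, hxv,
            hy'v.2 ▸ hzyR', Finset.mem_sdiff.mpr ⟨hz'C, hz'ne.2⟩⟩
        obtain ⟨ΓA, ΓC, hnc2, hle⟩ := ih ΓA' (insert u ΓC') ΓR'' hcard'' h2
        refine ⟨ΓA, ΓC, hnc2, ?_⟩
        have h1 := Finset.card_insert_le u ΓC'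
        have h2 : ΓR''.card + 1 = ΓR'.card := by rw [hR'']; exact Finset.card_erase_add_one he
        omega

/-!
STATEMENT 2.
Query `q_conf^AC ← A(x), R(x,y), R(z,y), C(z)`, with `A`, `C` unary and `R`
binary, all endogenous.  For every database `D = (A, R, C)` satisfying the
query, there is a minimum-size contingency set containing no `R`-tuples,
i.e. a contingency set `(ΓA, ∅, ΓC)` whose size is at most the size of every
contingency set `(ΓA', ΓR', ΓC')`.
-/
theorem stmt_2 {α : Type} [DecidableEq α]
    (A C : Finset α) (R : Finset (α × α))
    (hsat : ∃ x y z, x ∈ A ∧ (x, y) ∈ R ∧ (z, y) ∈ R ∧ z ∈ C) :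
    ∃ ΓA ΓC : Finset α, ΓA ⊆ A ∧ ΓC ⊆ C ∧
      (¬ ∃ x y z, x ∈ A \ ΓA ∧ (x, y) ∈ R ∧ (z, y) ∈ R ∧ z ∈ C \ ΓC) ∧
      ∀ (ΓA' ΓC' : Finset α) (ΓR' : Finset (α × α)),
        ΓA' ⊆ A → ΓC' ⊆ C → ΓR' ⊆ R →
        (¬ ∃ x y z, x ∈ A \ ΓA' ∧ (x, y) ∈ R \ ΓR' ∧ (z, y) ∈ R \ ΓR' ∧ z ∈ C \ ΓC') →
        ΓA.card + ΓC.card ≤ ΓA'.card + ΓR'.card + ΓC'.card := by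
  classical
  set P : ℕ → Prop := fun m => ∃ ΓA ΓC : Finset α, ΓA ⊆ A ∧ ΓC ⊆ C ∧
      (¬ ∃ x y z, x ∈ A \ ΓA ∧ (x, y) ∈ R ∧ (z, y) ∈ R ∧ z ∈ C \ ΓC) ∧
      ΓA.card + ΓC.card = m with hP
  have hPex : ∃ m, P m := by
    refine ⟨A.card + (∅ : Finset α).card, A, ∅, le_refl A, Finset.empty_subset C, ?_, rfl⟩
    rintro ⟨x, y, z, hx, -⟩
    simp at hx
  obtain ⟨ΓA, ΓC, hA, hC, hnc, hcard⟩ := Nat.find_spec hPex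
  refine ⟨ΓA, ΓC, hA, hC, hnc, ?_⟩
  intro ΓA' ΓC' ΓR' hA' hC' hR' hnc'
  obtain ⟨ΓA₀, ΓC₀, hnc₀, hle₀⟩ := key_stmt2 A C R ΓR'.card ΓA' ΓC' ΓR' le_rfl hnc'
  have hmem : P ((ΓA₀ ∩ A).card + (ΓC₀ ∩ C).card) := by
    refine ⟨ΓA₀ ∩ A, ΓC₀ ∩ C, Finset.inter_subset_right, Finset.inter_subset_right, ?_, rfl⟩
    rintro ⟨x, y, z, hx, hxy, hzy, hz⟩
    refine hnc₀ ⟨x, y, z, ?_, hxy, hzy, ?_⟩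
    · rcases Finset.mem_sdiff.mp hx with ⟨h1, h2⟩
      exact Finset.mem_sdiff.mpr ⟨h1, fun hc => h2 (Finset.mem_inter.mpr ⟨hc, h1⟩)⟩
    · rcases Finset.mem_sdiff.mp hz with ⟨h1, h2⟩
      exact Finset.mem_sdiff.mpr ⟨h1, fun hc => h2 (Finset.mem_inter.mpr ⟨hc, h1⟩)⟩
  have hfind : Nat.find hPex ≤ (ΓA₀ ∩ A).card + (ΓC₀ ∩ C).card := Nat.find_le hmem
  have hi1 : (ΓA₀ ∩ A).card ≤ ΓA₀.card := Finset.card_le_card Finset.inter_subset_left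
  have hi2 : (ΓC₀ ∩ C).card ≤ ΓC₀.card := Finset.card_le_card Finset.inter_subset_left
  omega
end

section
/- Consider the query q_3perm-R^A ← A(x), R(x,y), R(y,z), R(z,y), with A unary and R binary, all endogenous. Call an R-tuple (a,b) one-way if (b,a) ∉ R. For every database D with D ⊨ q_3perm-R^A, there exists a minimum-size contingency set for (q_3perm-R^A, D) that contains no one-way R-tuples. -/
/-!
STATEMENT 3.
Query `q_3perm-R^A ← A(x), R(x,y), R(y,z), R(z,y)`, with `A` unary and `R`
binary, all endogenous.  An `R`-tuple `(a,b)` is one-way if `(b,a) ∉ R`.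
For every database `D = (A, R)` satisfying the query, there is a minimum-size
contingency set `(ΓA, ΓR)` containing no one-way `R`-tuples, i.e. every tuple
`(a,b) ∈ ΓR` has its inverse `(b,a)` in `R`.
-/
theorem stmt_3 {α : Type} [DecidableEq α]
    (A : Finset α) (R : Finset (α × α))
    (hsat : ∃ x y z, x ∈ A ∧ (x, y) ∈ R ∧ (y, z) ∈ R ∧ (z, y) ∈ R) :
    ∃ (ΓA : Finset α) (ΓR : Finset (α × α)), ΓA ⊆ A ∧ ΓR ⊆ R ∧
      (∀ t ∈ ΓR, (t.2, t.1) ∈ R) ∧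
      (¬ ∃ x y z, x ∈ A \ ΓA ∧ (x, y) ∈ R \ ΓR ∧ (y, z) ∈ R \ ΓR ∧ (z, y) ∈ R \ ΓR) ∧
      ∀ (ΓA' : Finset α) (ΓR' : Finset (α × α)),
        ΓA' ⊆ A → ΓR' ⊆ R →
        (¬ ∃ x y z, x ∈ A \ ΓA' ∧ (x, y) ∈ R \ ΓR' ∧ (y, z) ∈ R \ ΓR' ∧ (z, y) ∈ R \ ΓR') →
        ΓA.card + ΓR.card ≤ ΓA'.card + ΓR'.card := by
  classical
  have hex : ∃ n, ∃ (ΓA : Finset α) (ΓR : Finset (α × α)), ΓA ⊆ A ∧ ΓR ⊆ R ∧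
      (¬ ∃ x y z, x ∈ A \ ΓA ∧ (x, y) ∈ R \ ΓR ∧ (y, z) ∈ R \ ΓR ∧ (z, y) ∈ R \ ΓR) ∧
      ΓA.card + ΓR.card = n := by
    refine ⟨A.card, A, ∅, subset_rfl, Finset.empty_subset _, ?_, by simp⟩
    rintro ⟨x, y, z, hx, -⟩
    simp at hx
  set m := Nat.find hex with hm
  have hex2 : ∃ k, ∃ (ΓA : Finset α) (ΓR : Finset (α × α)), ΓA ⊆ A ∧ ΓR ⊆ R ∧
      (¬ ∃ x y z, x ∈ A \ ΓA ∧ (x, y) ∈ R \ ΓR ∧ (y, z) ∈ R \ ΓR ∧ (z, y) ∈ R \ ΓR) ∧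
      ΓA.card + ΓR.card = m ∧ ΓR.card = k := by
    obtain ⟨ΓA, ΓR, h1, h2, h3, h4⟩ := Nat.find_spec hex
    exact ⟨ΓR.card, ΓA, ΓR, h1, h2, h3, h4, rfl⟩
  obtain ⟨ΓA, ΓR, h1, h2, h3, h4, h5⟩ := Nat.find_spec hex2
  refine ⟨ΓA, ΓR, h1, h2, ?_, h3, ?_⟩
  · -- no one-way tuples
    rintro ⟨a, b⟩ htΓ
    by_contra hba
    have hab : (a, b) ∈ R := h2 htΓ
    set ΓA' := if a ∈ A then insert a ΓA else ΓA with hΓA'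
    set ΓR' := ΓR.erase (a, b) with hΓR'
    have hsubA : ΓA ⊆ ΓA' := by
      rw [hΓA']; split
      · exact Finset.subset_insert _ _
      · exact subset_rfl
    have hA' : ΓA' ⊆ A := by
      rw [hΓA']; split
      · exact Finset.insert_subset (by assumption) h1
      · exact h1
    have hR' : ΓR' ⊆ R := (Finset.erase_subset _ _).trans h2
    have hC' : ¬ ∃ x y z, x ∈ A \ ΓA' ∧ (x, y) ∈ R \ ΓR' ∧ (y, z) ∈ R \ ΓR' ∧
        (z, y) ∈ R \ ΓR' := by
      rintro ⟨x, y, z, hx, hxy, hyz, hzy⟩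
      simp only [Finset.mem_sdiff, hΓR', Finset.mem_erase, not_and, ne_eq,
        not_not] at hx hxy hyz hzy
      by_cases hc1 : (y, z) = (a, b)
      · have : (z, y) = (b, a) := by
          rw [Prod.ext_iff] at hc1 ⊢; exact ⟨hc1.2, hc1.1⟩
        exact hba (this ▸ hzy.1)
      by_cases hc2 : (z, y) = (a, b)
      · have : (y, z) = (b, a) := by
          rw [Prod.ext_iff] at hc2 ⊢; exact ⟨hc2.2, hc2.1⟩
        exact hba (this ▸ hyz.1)
      by_cases hc3 : (x, y) = (a, b)
      · have hxa : x = a := (Prod.ext_iff.mp hc3).1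
        have haA : a ∈ A := hxa ▸ hx.1
        have : ΓA' = insert a ΓA := by rw [hΓA', if_pos haA]
        exact hx.2 (this ▸ (hxa ▸ Finset.mem_insert_self a ΓA))
      · exact h3 ⟨x, y, z,
          Finset.mem_sdiff.mpr ⟨hx.1, fun h => hx.2 (hsubA h)⟩,
          Finset.mem_sdiff.mpr ⟨hxy.1, fun h => hxy.2 hc3 h⟩,
          Finset.mem_sdiff.mpr ⟨hyz.1, fun h => hyz.2 hc1 h⟩,
          Finset.mem_sdiff.mpr ⟨hzy.1, fun h => hzy.2 hc2 h⟩⟩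
    -- cardinalities
    have hcardR' : ΓR'.card = ΓR.card - 1 := Finset.card_erase_of_mem htΓ
    have hΓRpos : 1 ≤ ΓR.card := Finset.card_pos.mpr ⟨_, htΓ⟩
    have hcardA' : ΓA'.card ≤ ΓA.card + 1 := by
      rw [hΓA']; split
      · exact Finset.card_insert_le _ _
      · omega
    have hle : ΓA'.card + ΓR'.card ≤ m := by omega
    have hge : m ≤ ΓA'.card + ΓR'.card :=
      Nat.find_min' hex ⟨ΓA', ΓR', hA', hR', hC', rfl⟩
    have heq : ΓA'.card + ΓR'.card = m := le_antisymm hle hge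
    have hlt : ΓR'.card < Nat.find hex2 := by omega
    exact Nat.find_min hex2 hlt ⟨ΓA', ΓR', hA', hR', hC', heq, rfl⟩
  · intro ΓA' ΓR' hA' hR' hC'
    have := Nat.find_min' hex ⟨ΓA', ΓR', hA', hR', hC', rfl⟩
    omega
end

section
/- Let q be a self-join-free Boolean conjunctive query (no relation name occurs in two distinct atoms of q) and let q^sj be a self-join variation of q, i.e., a query obtained from q by replacing some atoms S_i(v̄) with atoms R_i(v̄), where each relation name R_i occurs elsewhere in q. Assume q^sj is minimal. Then for every database D with D ⊨ q there exists a database D' with D' ⊨ q^sj such that for every integer k, (q, D) has a contingency set of size at most k if and only if (q^sj, D') has a contingency set of size at most k. -/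
/-!
The database `D'` is obtained from `D` by rewriting every tuple `(R_i, l)` of an atom `R_i(v̄)`
of `q` as the tuple `(R'_i, l.zip v̄)` of the corresponding atom of `q^sj`: each value is tagged
with the variable at its position. Minimality makes the atoms of `q^sj` pairwise distinct, so this
rewriting is injective and contingency sets correspond one-to-one. A witness of `q` gives one of
`q^sj` by tagging. Conversely, a witness of `q^sj` in the tagged database induces an endomorphism
`(j, h)` of `q^sj` together with a witness of the query whose `i`-th atom uses `R_{j i}`. By
minimality `j` is a permutation, so a power of `(j, h)` inverts it, and composing gives a witness
of `q` itself.
-/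

open Function Finset

section Resilience

variable {A B : Type*} [DecidableEq A] [DecidableEq B]

/-- The resilience of `(Q, D)` is at most `k`, where `Q S` means that the database `S` satisfies
the query. -/
def ResilienceLE (Q : Finset A → Prop) (D : Finset A) (k : ℕ) : Prop :=
  ∃ Γ, Γ ⊆ D ∧ Γ.card ≤ k ∧ ¬ Q (D \ Γ)

theorem resilienceLE_filter_iff {Q : Finset A → Prop} {D : Finset A} (p : A → Prop)
    [DecidablePred p] (hQ : ∀ S ⊆ D, Q (S.filter p) ↔ Q S) (k : ℕ) :
    ResilienceLE Q (D.filter p) k ↔ ResilienceLE Q D k := by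
  constructor
  · rintro ⟨Γ, hΓD, hΓk, hΓ⟩
    refine ⟨Γ, hΓD.trans (filter_subset _ _), hΓk, fun h => hΓ ?_⟩
    have hsdiff : (D \ Γ).filter p = D.filter p \ Γ := by
      ext t
      have hΓt := @hΓD t
      simp only [mem_filter, mem_sdiff] at hΓt ⊢
      tauto
    rwa [← hsdiff, hQ _ sdiff_subset]
  · rintro ⟨Γ, hΓD, hΓk, hΓ⟩
    refine ⟨Γ.filter p, filter_subset_filter p hΓD, (card_filter_le _ _).trans hΓk,
      fun h => hΓ ?_⟩
    have hsdiff : (D \ Γ).filter p = D.filter p \ Γ.filter p := by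
      ext t
      simp only [mem_filter, mem_sdiff]
      tauto
    rwa [← hQ _ sdiff_subset, hsdiff]

theorem resilienceLE_image_iff {Q : Finset A → Prop} {Q' : Finset B → Prop} {D : Finset A}
    {f : A → B} (hf : Set.InjOn f D) (hQ : ∀ S ⊆ D, Q S ↔ Q' (S.image f)) (k : ℕ) :
    ResilienceLE Q D k ↔ ResilienceLE Q' (D.image f) k := by
  constructor
  · rintro ⟨Γ, hΓD, hΓk, hΓ⟩
    refine ⟨Γ.image f, image_subset_image hΓD, card_image_le.trans hΓk, ?_⟩
    rwa [← image_sdiff_of_injOn hf hΓD, ← hQ _ sdiff_subset]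
  · rintro ⟨Γ', hΓ'D, hΓ'k, hΓ'⟩
    refine ⟨D.filter (f · ∈ Γ'), filter_subset _ _, ?_, ?_⟩
    · refine (card_le_card_of_injOn f (fun t ht => ?_) (hf.mono (filter_subset _ _))).trans hΓ'k
      exact (mem_filter.1 ht).2
    · have himage : (D \ D.filter (f · ∈ Γ')).image f = D.image f \ Γ' := by
        ext b
        simp only [mem_image, mem_sdiff, mem_filter]
        constructor
        · rintro ⟨a, ⟨haD, ha⟩, rfl⟩
          exact ⟨⟨a, haD, rfl⟩, fun h => ha ⟨haD, h⟩⟩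
        · rintro ⟨⟨a, haD, rfl⟩, hb⟩
          exact ⟨a, ⟨haD, fun h => hb h.2⟩, rfl⟩
      rwa [hQ _ sdiff_subset, himage]

end Resilience

namespace CQ

variable {Rn ι κ μ : Type*}

def Holds {β : Type*} (rel : ι → Rn) (args : ι → List ℕ) (S : Finset (Rn × List β)) : Prop :=
  ∃ σ : ℕ → β, ∀ i, (rel i, (args i).map σ) ∈ S

theorem holds_filter_iff {β : Type*} {rel : ι → Rn} {args : ι → List ℕ}
    {p : Rn × List β → Prop} [DecidablePred p] (hp : ∀ i l, p (rel i, l))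
    {S : Finset (Rn × List β)} : Holds rel args (S.filter p) ↔ Holds rel args S :=
  ⟨fun ⟨σ, hσ⟩ => ⟨σ, fun i => mem_of_mem_filter _ (hσ i)⟩,
    fun ⟨σ, hσ⟩ => ⟨σ, fun i => mem_filter.2 ⟨hσ i, hp _ _⟩⟩⟩

/-- The query homomorphism from `(rel₂, args₂)` to `(rel₁, args₁)` sending atom `k` to atom `j k`
and variable `v` to `h v`. -/
def IsHom (rel₁ : ι → Rn) (args₁ : ι → List ℕ) (rel₂ : κ → Rn) (args₂ : κ → List ℕ)
    (j : κ → ι) (h : ℕ → ℕ) : Prop :=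
  ∀ k, rel₁ (j k) = rel₂ k ∧ (args₂ k).map h = args₁ (j k)

section IsHom

variable {rel₁ : ι → Rn} {args₁ : ι → List ℕ} {rel₂ : κ → Rn} {args₂ : κ → List ℕ}
  {j : κ → ι} {h : ℕ → ℕ}

theorem IsHom.id (rel : ι → Rn) (args : ι → List ℕ) : IsHom rel args rel args _root_.id _root_.id :=
  fun _ => ⟨rfl, List.map_id _⟩

theorem IsHom.comp {rel₃ : μ → Rn} {args₃ : μ → List ℕ} {j' : μ → κ} {h' : ℕ → ℕ}
    (hjh : IsHom rel₁ args₁ rel₂ args₂ j h) (hjh' : IsHom rel₂ args₂ rel₃ args₃ j' h') :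
    IsHom rel₁ args₁ rel₃ args₃ (j ∘ j') (h ∘ h') := fun k =>
  ⟨(hjh (j' k)).1.trans (hjh' k).1, by
    rw [comp_apply, ← (hjh (j' k)).2, ← (hjh' k).2, List.map_map]⟩

theorem IsHom.iterate {rel : ι → Rn} {args : ι → List ℕ} {j : ι → ι}
    (hjh : IsHom rel args rel args j h) (n : ℕ) : IsHom rel args rel args j^[n] h^[n] := by
  induction n with
  | zero => exact IsHom.id rel args
  | succ n ih => exact ih.comp hjh

theorem Holds.of_isHom {β : Type*} {S : Finset (Rn × List β)}
    (hjh : IsHom rel₁ args₁ rel₂ args₂ j h) : Holds rel₁ args₁ S → Holds rel₂ args₂ S :=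
  fun ⟨σ, hσ⟩ => ⟨σ ∘ h, fun k => by
    rw [← List.map_map, (hjh k).2, ← (hjh k).1]
    exact hσ (j k)⟩

/-- Some power of an injective endomorphism is its inverse. -/
theorem IsHom.exists_rightInverse [Finite ι] {rel : ι → Rn} {args : ι → List ℕ} {j : ι → ι}
    (hjh : IsHom rel args rel args j h) (hj : Injective j) :
    ∃ j' h', IsHom rel args rel args j' h' ∧ ∀ i, j (j' i) = i := by
  obtain ⟨n, hn, hpow⟩ := (isOfFinOrder_of_finite
    (Equiv.ofBijective j (Finite.injective_iff_bijective.1 hj))).exists_pow_eq_one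
  refine ⟨j^[n - 1], h^[n - 1], hjh.iterate _, fun i => ?_⟩
  have hjn : j^[n] i = i := by
    rw [← Equiv.coe_ofBijective j (Finite.injective_iff_bijective.1 hj), ← Equiv.Perm.coe_pow,
      hpow, Equiv.Perm.coe_one, id_eq]
  rwa [← Nat.sub_add_cancel hn, iterate_succ_apply'] at hjn

theorem IsHom.holds_of_holds_comp [Finite ι] {rel : ι → Rn} {args : ι → List ℕ} {j : ι → ι}
    (hjh : IsHom rel args rel args j h) (hj : Injective j) {β : Type*} {rel₀ : ι → Rn}
    {S : Finset (Rn × List β)} : Holds (rel₀ ∘ j) args S → Holds rel₀ args S := by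
  obtain ⟨j', h', hj'h', hjj'⟩ := hjh.exists_rightInverse hj
  exact Holds.of_isHom fun i => ⟨by rw [comp_apply, hjj'], (hj'h' i).2⟩

end IsHom

def IsMinimal [Fintype ι] (ar : Rn → ℕ) (rel : ι → Rn) (args : ι → List ℕ) : Prop :=
  ¬ ∃ (n' : ℕ) (rel'' : Fin n' → Rn) (args'' : Fin n' → List ℕ),
    n' < Fintype.card ι ∧ (∀ i, (args'' i).length = ar (rel'' i)) ∧
    ∀ (β : Type) (D : Finset (Rn × List β)), Holds rel args D ↔ Holds rel'' args'' D

namespace IsMinimal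

variable [Fintype ι] {ar : Rn → ℕ} {rel : ι → Rn} {args : ι → List ℕ}

/-- The image of an endomorphism is an equivalent subquery, so it must contain all the atoms. -/
theorem injective_atoms_comp_of_isHom (hmin : IsMinimal ar rel args)
    (hlen : ∀ i, (args i).length = ar (rel i)) {j : ι → ι} {h : ℕ → ℕ}
    (hjh : IsHom rel args rel args j h) : Injective fun i => (rel (j i), args (j i)) := by
  classical
  intro a b hab
  by_contra hne
  set T := univ.image fun i => (rel (j i), args (j i))
  have hT : T.card < Fintype.card ι := by
    refine lt_of_le_of_ne card_image_le fun hcard => hne ?_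
    rw [card_univ.symm, card_image_iff] at hcard
    exact hcard (mem_coe.2 (mem_univ a)) (mem_coe.2 (mem_univ b)) hab
  set e := T.equivFin.symm
  refine hmin ⟨T.card, fun k => (e k : Rn × List ℕ).1, fun k => (e k : Rn × List ℕ).2, hT,
    fun k => ?_, fun β S => ⟨fun ⟨σ, hσ⟩ => ⟨σ, fun k => ?_⟩, Holds.of_isHom
      (j := fun i => T.equivFin ⟨_, mem_image_of_mem _ (mem_univ i)⟩) (h := h) fun i => ?_⟩⟩
  · obtain ⟨i, -, hi⟩ := mem_image.1 (e k).2
    dsimp only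
    rw [← hi]
    exact hlen (j i)
  · obtain ⟨i, -, hi⟩ := mem_image.1 (e k).2
    dsimp only
    rw [← hi]
    exact hσ (j i)
  · simp only [e, Equiv.symm_apply_apply]
    exact hjh i

theorem injective_atoms (hmin : IsMinimal ar rel args)
    (hlen : ∀ i, (args i).length = ar (rel i)) : Injective fun i => (rel i, args i) :=
  hmin.injective_atoms_comp_of_isHom hlen (IsHom.id rel args)

theorem injective_of_isHom (hmin : IsMinimal ar rel args)
    (hlen : ∀ i, (args i).length = ar (rel i)) {j : ι → ι} {h : ℕ → ℕ}
    (hjh : IsHom rel args rel args j h) : Injective j :=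
  fun a b hab => hmin.injective_atoms_comp_of_isHom hlen hjh (by simp only [hab])

end IsMinimal

section Tagging

variable {α : Type*} {rel rel' : ι → Rn} {args : ι → List ℕ}

/-- Renames `rel i` to `rel' i` and tags each entry of a tuple of `rel i` with the variable at its
position in `args i` (see `tagTuple_apply`); tuples of relations outside the range of `rel` get
junk values. -/
noncomputable def tagTuple (rel rel' : ι → Rn) (args : ι → List ℕ) (t : Rn × List α) :
    Rn × List (α × ℕ) :=
  (extend rel rel' _root_.id t.1, t.2.zip (extend rel args (fun _ => []) t.1))

theorem tagTuple_apply (hrel : Injective rel) (i : ι) (l : List α) :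
    tagTuple rel rel' args (rel i, l) = (rel' i, l.zip (args i)) := by
  simp only [tagTuple, hrel.extend_apply]

def atomShaped (rel : ι → Rn) (args : ι → List ℕ) : Set (Rn × List α) :=
  {t | ∃ i, t.1 = rel i ∧ t.2.length = (args i).length}

theorem injOn_tagTuple (hrel : Injective rel) (hatoms : Injective fun i => (rel' i, args i)) :
    Set.InjOn (tagTuple rel rel' args) (atomShaped (α := α) rel args) := by
  rintro ⟨_, l⟩ ⟨i, rfl, hl⟩ ⟨_, l'⟩ ⟨i', rfl, hl'⟩ he
  rw [tagTuple_apply hrel, tagTuple_apply hrel, Prod.mk.injEq] at he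
  have hunzip := congrArg List.unzip he.2
  rw [List.unzip_zip hl, List.unzip_zip hl', Prod.mk.injEq] at hunzip
  obtain rfl : i = i' := hatoms (Prod.ext he.1 hunzip.2)
  exact congrArg (Prod.mk _) hunzip.1

theorem holds_iff_holds_image_tagTuple [Fintype ι] [DecidableEq Rn] [DecidableEq α]
    {ar : Rn → ℕ} (hrel : Injective rel)
    (hmin : IsMinimal ar rel' args) (hlen' : ∀ i, (args i).length = ar (rel' i))
    {S : Finset (Rn × List α)} (hS : (S : Set (Rn × List α)) ⊆ atomShaped rel args) :
    Holds rel args S ↔ Holds rel' args (S.image (tagTuple rel rel' args)) := by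
  constructor
  · rintro ⟨σ, hσ⟩
    refine ⟨fun v => (σ v, v), fun i => mem_image.2 ⟨_, hσ i, ?_⟩⟩
    have htag := List.zip_map' (f := σ) (g := _root_.id) (l := args i)
    rw [List.map_id] at htag
    rw [tagTuple_apply hrel, htag]
    rfl
  · rintro ⟨σ', hσ'⟩
    -- the tuple hit by atom `i` comes from an atom `j i` of `q`; its tags give an endomorphism
    have hpre : ∀ i, ∃ j, (rel j, (args i).map (Prod.fst ∘ σ')) ∈ S ∧
        rel' j = rel' i ∧ (args i).map (Prod.snd ∘ σ') = args j := by
      intro i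
      obtain ⟨⟨_, l⟩, ht, hti⟩ := mem_image.1 (hσ' i)
      obtain ⟨j, rfl, hl⟩ := hS ht
      rw [tagTuple_apply hrel, Prod.mk.injEq] at hti
      have hunzip := congrArg List.unzip hti.2
      rw [List.unzip_zip hl, Prod.ext_iff, List.unzip_fst, List.unzip_snd, List.map_map,
        List.map_map] at hunzip
      exact ⟨j, hunzip.1 ▸ ht, hti.1, hunzip.2.symm⟩
    choose j hjS hjrel hjargs using hpre
    have hjh : IsHom rel' args rel' args j (Prod.snd ∘ σ') := fun i => ⟨hjrel i, hjargs i⟩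
    exact hjh.holds_of_holds_comp (hmin.injective_of_isHom hlen' hjh) ⟨Prod.fst ∘ σ', hjS⟩

end Tagging

end CQ

theorem stmt_6_general {Rn : Type} (ar : Rn → ℕ)
    {ι : Type} [Fintype ι]
    (rel rel' : ι → Rn) (args : ι → List ℕ)
    (hlen : ∀ i, (args i).length = ar (rel i))
    (hlen' : ∀ i, (args i).length = ar (rel' i))
    (hsjfree : Function.Injective rel)
    (hmin : ¬ ∃ (n' : ℕ) (rel'' : Fin n' → Rn) (args'' : Fin n' → List ℕ),
      n' < Fintype.card ι ∧ (∀ i, (args'' i).length = ar (rel'' i)) ∧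
      (∀ (β : Type) (D : Finset (Rn × List β)),
        (∃ σ : ℕ → β, ∀ i, (rel' i, (args i).map σ) ∈ D) ↔
        (∃ σ : ℕ → β, ∀ i, (rel'' i, (args'' i).map σ) ∈ D)))
    {α : Type} (D : Finset (Rn × List α))
    (hD : ∀ t ∈ D, t.2.length = ar t.1)
    (hsat : ∃ σ : ℕ → α, ∀ i, (rel i, (args i).map σ) ∈ D) :
    ∃ (β : Type) (D' : Finset (Rn × List β)),
      (∀ t ∈ D', t.2.length = ar t.1) ∧
      (∃ σ : ℕ → β, ∀ i, (rel' i, (args i).map σ) ∈ D') ∧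
      ∀ k : ℕ,
        (∃ Γ : Finset (Rn × List α), Γ ⊆ D ∧ Γ.card ≤ k ∧
          ¬ ∃ σ : ℕ → α, ∀ i,
            (rel i, (args i).map σ) ∈ D ∧ (rel i, (args i).map σ) ∉ Γ) ↔
        (∃ Γ : Finset (Rn × List β), Γ ⊆ D' ∧ Γ.card ≤ k ∧
          ¬ ∃ σ : ℕ → β, ∀ i,
            (rel' i, (args i).map σ) ∈ D' ∧ (rel' i, (args i).map σ) ∉ Γ) := by
  classical
  let p : Rn × List α → Prop := fun t => ∃ i, t.1 = rel i
  have hfilter : ∀ S : Finset (Rn × List α),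
      CQ.Holds rel args (S.filter p) ↔ CQ.Holds rel args S :=
    fun _ => CQ.holds_filter_iff fun i _ => ⟨i, rfl⟩
  have hshape : (D.filter p : Set (Rn × List α)) ⊆ CQ.atomShaped rel args := fun t ht => by
    obtain ⟨htD, i, hi⟩ := mem_filter.1 ht
    exact ⟨i, hi, by rw [hD t htD, hi, hlen]⟩
  have hequiv : ∀ S ⊆ D.filter p,
      CQ.Holds rel args S ↔ CQ.Holds rel' args (S.image (CQ.tagTuple rel rel' args)) :=
    fun S hS => CQ.holds_iff_holds_image_tagTuple hsjfree hmin hlen'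
      ((coe_subset.2 hS).trans hshape)
  refine ⟨α × ℕ, (D.filter p).image (CQ.tagTuple rel rel' args), ?_,
    (hequiv _ subset_rfl).1 ((hfilter D).2 hsat), fun k => ?_⟩
  · rintro _ hmem
    obtain ⟨t, ht, rfl⟩ := mem_image.1 hmem
    obtain ⟨i, hi, hl⟩ := hshape ht
    rw [← Prod.mk.eta (p := t), hi, CQ.tagTuple_apply hsjfree, List.length_zip, hl, min_self,
      hlen']
  · have hinj := (CQ.injOn_tagTuple hsjfree (CQ.IsMinimal.injective_atoms hmin hlen')).mono hshape
    have hres := (resilienceLE_filter_iff p (fun S _ => hfilter S) k).symm.trans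
      (resilienceLE_image_iff hinj hequiv k)
    simpa only [ResilienceLE, CQ.Holds, mem_sdiff] using hres

theorem stmt_6 {Rn : Type} (ar : Rn → ℕ)
    {ι : Type} [Fintype ι]
    (rel rel' : ι → Rn) (args : ι → List ℕ)
    (hlen : ∀ i, (args i).length = ar (rel i))
    (hlen' : ∀ i, (args i).length = ar (rel' i))
    (hsjfree : Function.Injective rel)
    (hvariation : ∀ i, rel' i = rel i ∨ ∃ j, j ≠ i ∧ rel' i = rel j)
    (hmin : ¬ ∃ (n' : ℕ) (rel'' : Fin n' → Rn) (args'' : Fin n' → List ℕ),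
      n' < Fintype.card ι ∧ (∀ i, (args'' i).length = ar (rel'' i)) ∧
      (∀ (β : Type) (D : Finset (Rn × List β)),
        (∃ σ : ℕ → β, ∀ i, (rel' i, (args i).map σ) ∈ D) ↔
        (∃ σ : ℕ → β, ∀ i, (rel'' i, (args'' i).map σ) ∈ D)))
    {α : Type} (D : Finset (Rn × List α))
    (hD : ∀ t ∈ D, t.2.length = ar t.1)
    (hsat : ∃ σ : ℕ → α, ∀ i, (rel i, (args i).map σ) ∈ D) :
    ∃ (β : Type) (D' : Finset (Rn × List β)),
      (∀ t ∈ D', t.2.length = ar t.1) ∧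
      (∃ σ : ℕ → β, ∀ i, (rel' i, (args i).map σ) ∈ D') ∧
      ∀ k : ℕ,
        (∃ Γ : Finset (Rn × List α), Γ ⊆ D ∧ Γ.card ≤ k ∧
          ¬ ∃ σ : ℕ → α, ∀ i,
            (rel i, (args i).map σ) ∈ D ∧ (rel i, (args i).map σ) ∉ Γ) ↔
        (∃ Γ : Finset (Rn × List β), Γ ⊆ D' ∧ Γ.card ≤ k ∧
          ¬ ∃ σ : ℕ → β, ∀ i,
            (rel' i, (args i).map σ) ∈ D' ∧ (rel' i, (args i).map σ) ∉ Γ) :=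
  stmt_6_general ar rel rel' args hlen hlen' hsjfree hmin D hD hsat
end

section
/- Let q be a connected Boolean conjunctive query that contains no triad. Then the endogenous atoms of q can be arranged in a linear order g_1, ..., g_t such that for every variable x, the set of endogenous atoms in which x occurs forms a contiguous block of this order; that is, q is pseudo-linear. -/
/-!
Say that an atom `m` is *between* `y` and `c` if `m` reaches `c` in the dual hypergraph without
using variables of `y`, and reaches `y` without using variables of `c`; in a triad-free query `m`
then separates `y` from `c`. The combinatorial heart is a transfer property: if `a` is between
`p` and `q` and `m` is between `y` and `a`, then `m` is already between two of `p`, `q`, `y`.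
Hence an endpoint of a pool of endogenous atoms (an atom between no two of them) remains one when
an atom lying between two members of the pool is added, and every nonempty pool has an endpoint.
Refining this, given an endpoint `ω` outside a pool, some endpoint `m` of the pool separates `ω`
from all of it. Placing such atoms in front of `ω` one at a time lists the endogenous atoms so
that each separates the atoms before it from those after it; hence a variable shared by two atoms
occurs in every atom in between.
-/

theorem List.sublist_of_idxOf_lt {α : Type*} [DecidableEq α] {L : List α} {a b c : α}
    (ha : a ∈ L) (hb : b ∈ L) (hc : c ∈ L) (hab : L.idxOf a < L.idxOf b)
    (hbc : L.idxOf b < L.idxOf c) : [a, b, c].Sublist L := by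
  have hsub := List.map_getElem_sublist (l := L)
    (is := [⟨_, List.idxOf_lt_length_iff.2 ha⟩, ⟨_, List.idxOf_lt_length_iff.2 hb⟩,
      ⟨_, List.idxOf_lt_length_iff.2 hc⟩])
    (by simp [List.pairwise_cons, hab, hbc, hab.trans hbc])
  simpa [List.getElem_idxOf] using hsub

namespace DualHypergraph

variable {ι V : Type*} (vars : ι → Set V)

def Reach (P : Set V) : ι → ι → Prop :=
  Relation.ReflTransGen fun a b => ∃ v ∈ vars a, v ∈ vars b ∧ v ∉ P

def IsTriad (x y z : ι) : Prop :=
  x ≠ y ∧ x ≠ z ∧ y ≠ z ∧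
    Reach vars (vars z) x y ∧ Reach vars (vars x) y z ∧ Reach vars (vars y) x z

def TriadFree (E : Set ι) : Prop :=
  ∀ x ∈ E, ∀ y ∈ E, ∀ z ∈ E, ¬ IsTriad vars x y z

/-- In a linear arrangement of the atoms this says that `m` lies strictly between `y` and `c`. -/
def Between (m y c : ι) : Prop :=
  y ≠ c ∧ Reach vars (vars y) m c ∧ Reach vars (vars c) m y

def IsEndpoint (m : ι) (F : Finset ι) : Prop :=
  ∀ y ∈ F, ∀ c ∈ F, ¬ Between vars m y c

def Separated (L : List ι) : Prop :=
  ∀ x b z, [x, b, z].Sublist L → ¬ Reach vars (vars b) x z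

variable {vars}

section Reach

variable {P Q : Set V} {a b c : ι}

theorem Reach.single {v : V} (ha : v ∈ vars a) (hb : v ∈ vars b) (hP : v ∉ P) :
    Reach vars P a b :=
  Relation.ReflTransGen.single ⟨v, ha, hb, hP⟩

theorem Reach.trans (hab : Reach vars P a b) (hbc : Reach vars P b c) : Reach vars P a c :=
  Relation.ReflTransGen.trans hab hbc

theorem Reach.symm (h : Reach vars P a b) : Reach vars P b a := by
  induction h with
  | refl => exact Relation.ReflTransGen.refl
  | tail _ hlink ih =>
    obtain ⟨v, hv, hv', hvP⟩ := hlink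
    exact (Reach.single hv' hv hvP).trans ih

theorem Reach.anti (hPQ : P ⊆ Q) (h : Reach vars Q a b) : Reach vars P a b :=
  Relation.ReflTransGen.mono
    (fun _ _ ⟨v, hv, hv', hvQ⟩ => ⟨v, hv, hv', fun hvP => hvQ (hPQ hvP)⟩) _ _ h

theorem Reach.eq_of_vars_subset (h : Reach vars P a b) (hb : vars b ⊆ P) : a = b := by
  rcases Relation.ReflTransGen.cases_tail h with rfl | ⟨_, -, v, -, hv, hvP⟩
  · rfl
  · exact absurd (hb hv) hvP

theorem Reach.avoid_or_through (h : Reach vars P a b) (c : ι) :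
    Reach vars (P ∪ vars c) a b ∨ Reach vars P a c ∧ Reach vars P c b := by
  induction h with
  | refl => exact Or.inl Relation.ReflTransGen.refl
  | tail hab' hlink ih =>
    obtain ⟨v, hv, hv', hvP⟩ := hlink
    by_cases hvc : v ∈ vars c
    · exact Or.inr ⟨hab'.trans (Reach.single hv hvc hvP), Reach.single hvc hv' hvP⟩
    rcases ih with ih | ⟨hac, hcb⟩
    · exact Or.inl (ih.trans (Reach.single hv hv' fun h => h.elim hvP hvc))
    · exact Or.inr ⟨hac, hcb.trans (Reach.single hv hv' hvP)⟩

end Reach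

section Between

variable {a m y c p q : ι}

theorem Between.symm (h : Between vars m y c) : Between vars m c y :=
  ⟨h.1.symm, h.2.2, h.2.1⟩

theorem Between.ne_left (h : Between vars m y c) : m ≠ y := by
  rintro rfl
  exact h.1 (h.2.1.symm.eq_of_vars_subset subset_rfl).symm

theorem Between.ne_right (h : Between vars m y c) : m ≠ c :=
  h.symm.ne_left

theorem TriadFree.not_reach {E : Set ι} (htf : TriadFree vars E) (hm : m ∈ E) (hy : y ∈ E)
    (hc : c ∈ E) (h : Between vars m y c) : ¬ Reach vars (vars m) y c := fun hyc =>
  htf m hm y hy c hc ⟨h.ne_left, h.ne_right, h.1, h.2.2, hyc, h.2.1⟩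

theorem Between.between_of_reach (hapq : Between vars a p q) (hmya : Between vars m y a)
    (hsep : ¬ Reach vars (vars m) y a) (hmy : Reach vars (vars p) m y) :
    Between vars m p q ∨ Between vars m p y ∨ Between vars m q y := by
  obtain ⟨hpq, hapq, haqp⟩ := hapq
  have hmy_ne : m ≠ y := hmya.ne_left
  obtain ⟨-, hma, -⟩ := hmya
  by_cases hmp : Reach vars (vars y) m p
  · have hpy : p ≠ y := by
      rintro rfl
      exact hmy_ne (hmy.eq_of_vars_subset subset_rfl)
    exact Or.inr (Or.inl ⟨hpy, hmy, hmp⟩)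
  have hma' : Reach vars (vars y ∪ vars p) m a :=
    (hma.avoid_or_through p).resolve_right fun h => hmp h.1
  obtain ⟨-, hmp'⟩ : Reach vars (vars q) a m ∧ Reach vars (vars q) m p := by
    refine (haqp.avoid_or_through m).resolve_left fun h => ?_
    rcases h.avoid_or_through y with h | ⟨h, -⟩
    · exact hmp (hma.trans (h.anti Set.subset_union_right))
    · exact hsep (h.anti Set.subset_union_right).symm
  obtain ⟨hmy', -⟩ : Reach vars (vars q) m y ∧ Reach vars (vars q) y p :=
    (hmp'.avoid_or_through y).resolve_left fun h => hmp (h.anti Set.subset_union_right)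
  rcases hma'.avoid_or_through q with h | ⟨h, -⟩
  · exact Or.inl ⟨hpq, (h.anti fun v hv => Or.inl (Or.inr hv)).trans hapq, hmp'⟩
  · have hqy : q ≠ y := by
      rintro rfl
      exact hmy_ne (h.eq_of_vars_subset Set.subset_union_left)
    exact Or.inr (Or.inr ⟨hqy, hmy', h.anti Set.subset_union_left⟩)

theorem between_of_between_of_between (hapq : Between vars a p q)
    (hsa : ¬ Reach vars (vars a) p q) (hmya : Between vars m y a)
    (hsm : ¬ Reach vars (vars m) y a) :
    Between vars m p q ∨ Between vars m p y ∨ Between vars m q y := by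
  have hmy : Reach vars (vars p) m y ∨ Reach vars (vars q) m y := by
    rcases hmya.2.2.avoid_or_through p with h | ⟨-, hpy⟩
    · exact Or.inl (h.anti Set.subset_union_right)
    rcases hmya.2.2.avoid_or_through q with h | ⟨-, hqy⟩
    · exact Or.inr (h.anti Set.subset_union_right)
    exact absurd (hpy.trans hqy.symm) hsa
  rcases hmy with hmy | hmy
  · exact hapq.between_of_reach hmya hsm hmy
  · obtain h | h | h := hapq.symm.between_of_reach hmya hsm hmy
    exacts [Or.inl h.symm, Or.inr (Or.inr h), Or.inr (Or.inl h)]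

end Between

section Endpoint

variable {E : Set ι} {F : Finset ι} {a m p q ω : ι}

theorem IsEndpoint.mono {G : Finset ι} (h : IsEndpoint vars m F) (hGF : G ⊆ F) :
    IsEndpoint vars m G :=
  fun y hy c hc => h y (hGF hy) c (hGF hc)

theorem not_isEndpoint_iff :
    ¬ IsEndpoint vars m F ↔ ∃ p ∈ F, ∃ q ∈ F, Between vars m p q := by
  simp [IsEndpoint]

theorem TriadFree.isEndpoint_insert [DecidableEq ι] (htf : TriadFree vars E) (hFE : ↑F ⊆ E)
    (ha : a ∈ E) (hm : m ∈ E) (hp : p ∈ F) (hq : q ∈ F) (hapq : Between vars a p q)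
    (hmF : IsEndpoint vars m F) : IsEndpoint vars m (insert a F) := by
  have hsa := htf.not_reach ha (hFE hp) (hFE hq) hapq
  have hmya : ∀ y ∈ F, ¬ Between vars m y a := fun y hy hmya => by
    obtain h | h | h :=
      between_of_between_of_between hapq hsa hmya (htf.not_reach hm (hFE hy) ha hmya)
    exacts [hmF p hp q hq h, hmF p hp y hy h, hmF q hq y hy h]
  intro y hy c hc hmyc
  rw [Finset.mem_insert] at hy hc
  rcases hy with rfl | hy <;> rcases hc with rfl | hc
  · exact hmyc.1 rfl
  · exact hmya c hc hmyc.symm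
  · exact hmya y hy hmyc
  · exact hmF y hy c hc hmyc

theorem TriadFree.exists_isEndpoint [DecidableEq ι] (htf : TriadFree vars E) (hFE : ↑F ⊆ E)
    (hF : F.Nonempty) : ∃ m ∈ F, IsEndpoint vars m F := by
  induction F using Finset.induction_on with
  | empty => simp at hF
  | insert a F _ ih =>
    rw [Finset.coe_insert, Set.insert_subset_iff] at hFE
    by_cases ha : IsEndpoint vars a (insert a F)
    · exact ⟨a, Finset.mem_insert_self a F, ha⟩
    obtain ⟨p, hp, q, hq, hapq⟩ := not_isEndpoint_iff.1 ha
    have hp : p ∈ F := (Finset.mem_insert.1 hp).resolve_left hapq.ne_left.symm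
    have hq : q ∈ F := (Finset.mem_insert.1 hq).resolve_left hapq.ne_right.symm
    obtain ⟨m, hm, hmF⟩ := ih hFE.2 ⟨p, hp⟩
    exact ⟨m, Finset.mem_insert_of_mem hm,
      htf.isEndpoint_insert hFE.2 hFE.1 (hFE.2 hm) hp hq hapq hmF⟩

theorem IsEndpoint.exists_separating (hω : IsEndpoint vars ω F) (hωF : ω ∉ F)
    (hF : F.Nonempty) : ∃ a ∈ F, ∀ x ∈ F, ¬ Reach vars (vars a) ω x := by
  classical
  obtain ⟨a, ha, hmin⟩ :=
    F.exists_min_image (fun a => (F.filter (Reach vars (vars a) ω)).card) hF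
  refine ⟨a, ha, fun z hz hωz => ?_⟩
  have hωz_ne : ∀ {x}, x ∈ F → ¬ Reach vars (vars x) ω x := fun hx hωx =>
    hωF (hωx.eq_of_vars_subset subset_rfl ▸ hx)
  -- `z` separates `ω` from everything `a` separates it from, and also from `z`, which `a` does not
  have hsub : F.filter (Reach vars (vars z) ω) ⊂ F.filter (Reach vars (vars a) ω) := by
    refine (Finset.ssubset_iff_of_subset fun x hx => ?_).2
      ⟨z, by simp [hz, hωz], by simp [hωz_ne hz]⟩
    rw [Finset.mem_filter] at hx ⊢
    refine ⟨hx.1, ?_⟩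
    rcases hx.2.avoid_or_through a with h | ⟨hωa, -⟩
    · exact h.anti Set.subset_union_right
    · have haz : a ≠ z := by rintro rfl; exact hωz_ne hz hωz
      exact absurd ⟨haz, hωz, hωa⟩ (hω a ha z hz)
  exact (hmin z hz).not_gt (Finset.card_lt_card hsub)

theorem IsEndpoint.not_reach_of_between {F : Finset ι} (hmF : IsEndpoint vars m F)
    (hsep : ∀ x ∈ F, ¬ Reach vars (vars m) ω x) (hp : p ∈ F) (hq : q ∈ F)
    (hapq : Between vars a p q) : ¬ Reach vars (vars m) ω a := fun hωa => by
  obtain ⟨hpq, hapq, haqp⟩ := hapq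
  rcases hapq.avoid_or_through m with h | ⟨-, hmq⟩
  · exact hsep q hq (hωa.trans (h.anti Set.subset_union_right))
  rcases haqp.avoid_or_through m with h | ⟨-, hmp⟩
  · exact hsep p hp (hωa.trans (h.anti Set.subset_union_right))
  exact hmF p hp q hq ⟨hpq, hmq, hmp⟩

theorem TriadFree.exists_isEndpoint_separating [DecidableEq ι] (htf : TriadFree vars E) :
    ∀ F : Finset ι, ↑F ⊆ E → ω ∉ F → IsEndpoint vars ω F → F.Nonempty →
      ∃ m ∈ F, IsEndpoint vars m F ∧ ∀ x ∈ F, ¬ Reach vars (vars m) ω x := by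
  intro F
  induction F using Finset.strongInduction with
  | H F ih =>
  intro hFE hωF hω hF
  obtain ⟨a, ha, hasep⟩ := hω.exists_separating hωF hF
  by_cases haF : IsEndpoint vars a F
  · exact ⟨a, ha, haF, hasep⟩
  obtain ⟨p, hp, q, hq, hapq⟩ := not_isEndpoint_iff.1 haF
  have hp : p ∈ F.erase a := Finset.mem_erase_of_ne_of_mem hapq.ne_left.symm hp
  have hq : q ∈ F.erase a := Finset.mem_erase_of_ne_of_mem hapq.ne_right.symm hq
  have hFE' : ↑(F.erase a) ⊆ E := (Finset.coe_subset.2 (F.erase_subset a)).trans hFE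
  obtain ⟨m, hm, hmF, hmsep⟩ := ih (F.erase a) (Finset.erase_ssubset ha) hFE'
    (fun h => hωF (Finset.mem_of_mem_erase h)) (hω.mono (F.erase_subset a)) ⟨p, hp⟩
  refine ⟨m, Finset.mem_of_mem_erase hm, ?_, fun x hx => ?_⟩
  · simpa only [Finset.insert_erase ha] using
      htf.isEndpoint_insert hFE' (hFE ha) (hFE' hm) hp hq hapq hmF
  · rcases eq_or_ne x a with rfl | hxa
    · exact hmF.not_reach_of_between hmsep hp hq hapq
    · exact hmsep x (Finset.mem_erase_of_ne_of_mem hxa hx)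

end Endpoint

section Separated

variable {E : Set ι} {L S : List ι} {m ω x : ι}

theorem separated_of_length_lt (hL : L.length < 3) : Separated vars L :=
  fun _ _ _ h => absurd h.length_le (by simpa using hL)

theorem Separated.cons_cons (hm : Separated vars (m :: ω :: S))
    (hx : Separated vars (x :: ω :: S)) (hsep : ¬ Reach vars (vars m) ω x) :
    Separated vars (x :: m :: ω :: S) := by
  intro a b c h
  rcases List.sublist_cons_iff.1 h with h | ⟨r, hr, h⟩
  · exact hm a b c h
  obtain ⟨rfl, rfl⟩ := List.cons.inj hr
  rcases List.sublist_cons_iff.1 h with h | ⟨r, hr, h⟩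
  · exact hx a b c (h.cons_cons a)
  obtain ⟨rfl, rfl⟩ := List.cons.inj hr
  intro hac
  rcases hac.avoid_or_through ω with h' | ⟨h', -⟩
  · replace h' := h'.anti Set.subset_union_right
    rcases List.mem_cons.1 (List.singleton_sublist.1 h) with rfl | hc
    · exact hsep (h'.eq_of_vars_subset subset_rfl ▸ Relation.ReflTransGen.refl)
    · exact hx a ω c (((List.singleton_sublist.2 hc).cons_cons ω).cons_cons a) h'
  · exact hsep h'.symm

theorem TriadFree.exists_separated_append [DecidableEq ι] (htf : TriadFree vars E) :
    ∀ (F : Finset ι) (ω : ι) (S : List ι),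
      ↑F ⊆ E → ω ∉ F → IsEndpoint vars ω F → Separated vars (ω :: S) →
      (∀ x ∈ F, Separated vars (x :: ω :: S)) →
      ∃ L : List ι, (∀ x ∈ F, x ∈ L) ∧ Separated vars (L ++ ω :: S) := by
  intro F
  induction F using Finset.strongInduction with
  | H F ih =>
  intro ω S hFE hωF hω hS hxS
  rcases F.eq_empty_or_nonempty with rfl | hF
  · exact ⟨[], by simp, hS⟩
  obtain ⟨m, hm, hmF, hmsep⟩ := htf.exists_isEndpoint_separating F hFE hωF hω hF
  obtain ⟨L, hFL, hL⟩ := ih (F.erase m) (Finset.erase_ssubset hm) m (ω :: S)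
    ((Finset.coe_subset.2 (F.erase_subset m)).trans hFE) (F.notMem_erase m)
    (hmF.mono (F.erase_subset m)) (hxS m hm) fun x hx =>
      (hxS m hm).cons_cons (hxS x (Finset.mem_of_mem_erase hx))
        (hmsep x (Finset.mem_of_mem_erase hx))
  refine ⟨L ++ [m], fun x hx => ?_, by simpa using hL⟩
  rcases eq_or_ne x m with rfl | hxm
  · simp
  · simp [hFL x (Finset.mem_erase_of_ne_of_mem hxm hx)]

theorem TriadFree.exists_separated (htf : TriadFree vars E) (F : Finset ι)
    (hFE : ↑F ⊆ E) : ∃ L : List ι, (∀ x ∈ F, x ∈ L) ∧ Separated vars L := by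
  classical
  rcases F.eq_empty_or_nonempty with rfl | hF
  · exact ⟨[], by simp, separated_of_length_lt (by simp)⟩
  obtain ⟨ω, hω, hωF⟩ := htf.exists_isEndpoint hFE hF
  obtain ⟨L, hFL, hL⟩ := htf.exists_separated_append (F.erase ω) ω []
    ((Finset.coe_subset.2 (F.erase_subset ω)).trans hFE) (F.notMem_erase ω)
    (hωF.mono (F.erase_subset ω)) (separated_of_length_lt (by simp))
    fun _ _ => separated_of_length_lt (by simp)
  refine ⟨L ++ [ω], fun x hx => ?_, hL⟩
  rcases eq_or_ne x ω with rfl | hxω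
  · simp
  · simp [hFL x (Finset.mem_erase_of_ne_of_mem hxω hx)]

theorem Separated.mem_of_idxOf_le [DecidableEq ι] (hL : Separated vars L) {i j k : ι}
    (hi : i ∈ L) (hj : j ∈ L) (hk : k ∈ L) (hij : L.idxOf i ≤ L.idxOf j)
    (hjk : L.idxOf j ≤ L.idxOf k) {v : V} (hvi : v ∈ vars i) (hvk : v ∈ vars k) :
    v ∈ vars j := by
  by_contra hvj
  have hij : L.idxOf i < L.idxOf j :=
    hij.lt_of_ne fun h => hvj ((List.idxOf_inj hi).1 h ▸ hvi)
  have hjk : L.idxOf j < L.idxOf k :=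
    hjk.lt_of_ne fun h => hvj ((List.idxOf_inj hj).1 h ▸ hvk)
  exact hL i j k (List.sublist_of_idxOf_lt hi hj hk hij hjk) (Reach.single hvi hvk hvj)

end Separated

end DualHypergraph

theorem stmt_9_general {V ι : Type} [Fintype ι]
    (args : ι → List V)
    (exo : ι → Prop)
    (htriadfree : ¬ ∃ s₀ s₁ s₂ : ι, s₀ ≠ s₁ ∧ s₀ ≠ s₂ ∧ s₁ ≠ s₂ ∧
      ¬ exo s₀ ∧ ¬ exo s₁ ∧ ¬ exo s₂ ∧
      Relation.ReflTransGen
        (fun a b => ∃ v, v ∈ args a ∧ v ∈ args b ∧ v ∉ args s₂) s₀ s₁ ∧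
      Relation.ReflTransGen
        (fun a b => ∃ v, v ∈ args a ∧ v ∈ args b ∧ v ∉ args s₀) s₁ s₂ ∧
      Relation.ReflTransGen
        (fun a b => ∃ v, v ∈ args a ∧ v ∈ args b ∧ v ∉ args s₁) s₀ s₂) :
    ∃ ord : ι → ℕ,
      (∀ i j, ¬ exo i → ¬ exo j → ord i = ord j → i = j) ∧
      (∀ (v : V) (i j k : ι), ¬ exo i → ¬ exo j → ¬ exo k →
        ord i ≤ ord j → ord j ≤ ord k → v ∈ args i → v ∈ args k → v ∈ args j) := by
  classical
  have htf : DualHypergraph.TriadFree (fun i => {v | v ∈ args i}) {i | ¬ exo i} :=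
    fun x hx y hy z hz ⟨hxy, hxz, hyz, hxy', hyz', hxz'⟩ =>
      htriadfree ⟨x, y, z, hxy, hxz, hyz, hx, hy, hz, hxy', hyz', hxz'⟩
  obtain ⟨L, hL, hsep⟩ := htf.exists_separated (Finset.univ.filter (¬ exo ·)) (by simp)
  have hL : ∀ i, ¬ exo i → i ∈ L := fun i hi => hL i (by simpa using hi)
  exact ⟨L.idxOf, fun i j hi _ h => (List.idxOf_inj (hL i hi)).1 h,
    fun v i j k hi hj hk hij hjk hvi hvk =>
      hsep.mem_of_idxOf_le (hL i hi) (hL j hj) (hL k hk) hij hjk hvi hvk⟩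

theorem stmt_9 {Rn V ι : Type} [Fintype ι]
    (ar : Rn → ℕ)
    (rel : ι → Rn) (args : ι → List V)
    (hlen : ∀ i, (args i).length = ar (rel i))
    (exo : ι → Prop)
    (hconn : ¬ ∃ S : Set ι, S.Nonempty ∧ Sᶜ.Nonempty ∧
      ∀ i ∈ S, ∀ j ∈ Sᶜ, ¬ ∃ v, v ∈ args i ∧ v ∈ args j)
    (htriadfree : ¬ ∃ s₀ s₁ s₂ : ι, s₀ ≠ s₁ ∧ s₀ ≠ s₂ ∧ s₁ ≠ s₂ ∧
      ¬ exo s₀ ∧ ¬ exo s₁ ∧ ¬ exo s₂ ∧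
      Relation.ReflTransGen
        (fun a b => ∃ v, v ∈ args a ∧ v ∈ args b ∧ v ∉ args s₂) s₀ s₁ ∧
      Relation.ReflTransGen
        (fun a b => ∃ v, v ∈ args a ∧ v ∈ args b ∧ v ∉ args s₀) s₁ s₂ ∧
      Relation.ReflTransGen
        (fun a b => ∃ v, v ∈ args a ∧ v ∈ args b ∧ v ∉ args s₁) s₀ s₂) :
    ∃ ord : ι → ℕ,
      (∀ i j, ¬ exo i → ¬ exo j → ord i = ord j → i = j) ∧
      (∀ (v : V) (i j k : ι), ¬ exo i → ¬ exo j → ¬ exo k →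
        ord i ≤ ord j → ord j ≤ ord k → v ∈ args i → v ∈ args k → v ∈ args j) :=
  stmt_9_general args exo htriadfree
end

section
/- Consider the query cf_p ← R(x,y), H(x,z), R(z,y), where R is binary and endogenous and H is binary and exogenous. For every finite directed graph G = (V, E) with E nonempty, there exists a database D with D ⊨ cf_p such that ρ(cf_p, D) equals the minimum size of a vertex cover of G, i.e., of a set C ⊆ V such that every edge in E has at least one endpoint in C. -/
/-!
STATEMENT 13.
Query `cf_p ← R(x,y), H(x,z), R(z,y)`, with `R` binary endogenous and `H`
binary exogenous (so contingency sets use only `R`-tuples).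
For every finite directed graph `(V, E)` with `E` nonempty (endpoints of edges
being vertices), there is a database `(R, H)` satisfying `cf_p` whose
resilience equals the minimum size of a vertex cover of the graph.
-/
theorem stmt_13 {α : Type} [DecidableEq α]
    (V : Finset α) (E : Finset (α × α))
    (hE : E.Nonempty)
    (hends : ∀ e ∈ E, e.1 ∈ V ∧ e.2 ∈ V) :
    ∃ (γ : Type) (R H : Finset (γ × γ)),
      (∃ x y z : γ, (x, y) ∈ R ∧ (x, z) ∈ H ∧ (z, y) ∈ R) ∧
      sInf {c : ℕ | ∃ Γ : Finset (γ × γ), Γ ⊆ R ∧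
          (¬ ∃ x y z : γ, ((x, y) ∈ R ∧ (x, y) ∉ Γ) ∧ (x, z) ∈ H ∧
            ((z, y) ∈ R ∧ (z, y) ∉ Γ)) ∧
          Γ.card = c} =
      sInf {n : ℕ | ∃ C : Finset α, C ⊆ V ∧
          (∀ e ∈ E, e.1 ∈ C ∨ e.2 ∈ C) ∧ C.card = n} := by
  classical
  refine ⟨Option α,
    V.image (fun u => ((some u : Option α), (none : Option α))),
    E.image (fun e => ((some e.1 : Option α), (some e.2 : Option α))), ?_, ?_⟩
  · obtain ⟨e, he⟩ := hE
    obtain ⟨h1, h2⟩ := hends e he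
    exact ⟨some e.1, none, some e.2,
      Finset.mem_image_of_mem _ h1,
      Finset.mem_image_of_mem _ he,
      Finset.mem_image_of_mem _ h2⟩
  · congr 1
    ext n
    simp only [Set.mem_setOf_eq]
    constructor
    · rintro ⟨Γ, hΓR, hno, hcard⟩
      refine ⟨V.filter (fun u => (some u, (none : Option α)) ∈ Γ),
        Finset.filter_subset _ _, ?_, ?_⟩
      · intro e he
        obtain ⟨h1, h2⟩ := hends e he
        by_contra hcon
        push_neg at hcon
        simp only [Finset.mem_filter, h1, h2, true_and, not_or] at hcon
        exact hno ⟨some e.1, none, some e.2,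
          ⟨Finset.mem_image_of_mem _ h1, hcon.1⟩,
          Finset.mem_image_of_mem _ he,
          ⟨Finset.mem_image_of_mem _ h2, hcon.2⟩⟩
      · rw [← hcard]
        have hΓ : Γ = (V.filter (fun u => (some u, (none : Option α)) ∈ Γ)).image
            (fun u => ((some u : Option α), (none : Option α))) := by
          ext p
          simp only [Finset.mem_image, Finset.mem_filter]
          constructor
          · intro hp
            obtain ⟨u, hu, hup⟩ := Finset.mem_image.mp (hΓR hp)
            exact ⟨u, ⟨hu, hup ▸ hp⟩, hup⟩
          · rintro ⟨u, ⟨_, hu⟩, rfl⟩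
            exact hu
        have hc := congrArg Finset.card hΓ
        rw [Finset.card_image_of_injective _ (by
          intro a b hab
          simpa using congrArg Prod.fst hab : Function.Injective
            (fun u : α => ((some u : Option α), (none : Option α))))] at hc
        exact hc.symm
    · rintro ⟨C, hCV, hcov, hcard⟩
      refine ⟨C.image (fun u => ((some u : Option α), (none : Option α))),
        Finset.image_subset_image hCV, ?_, ?_⟩
      · rintro ⟨x, y, z, ⟨hxyR, hxyΓ⟩, hxzH, ⟨hzyR, hzyΓ⟩⟩
        obtain ⟨e, he, heq⟩ := Finset.mem_image.mp hxzH
        obtain ⟨u, hu, hueq⟩ := Finset.mem_image.mp hxyR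
        have hy : y = none := by
          have := congrArg Prod.snd hueq; simpa using this.symm
        have hx : x = some e.1 := by
          have := congrArg Prod.fst heq; simp at this; exact this.symm
        have hz : z = some e.2 := by
          have := congrArg Prod.snd heq; simp at this; exact this.symm
        rcases hcov e he with h | h
        · exact hxyΓ (by
            rw [hx, hy]
            exact Finset.mem_image_of_mem _ h)
        · exact hzyΓ (by
            rw [hz, hy]
            exact Finset.mem_image_of_mem _ h)
      · rw [← hcard]
        exact Finset.card_image_of_injective _ (by
          intro a b hab
          simpa using congrArg Prod.fst hab)
end

section
/- Consider the query q_perm ← R(x,y), R(y,x) over a single binary endogenous relation R. For every database D with D ⊨ q_perm, the resilience ρ(q_perm, D) equals the number of unordered pairs {a,b} of domain elements (allowing a = b) such that both (a,b) ∈ R and (b,a) ∈ R. -/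
/-!
A contingency set must delete, for every unordered pair `{a, b}` with `(a, b), (b, a) ∈ R`, at
least one of its two orientations, so it is at least as large as its image in `Sym2 α`, which
contains every such pair. Conversely, deleting one chosen orientation of each such pair already
falsifies the query.
-/

open Finset

section PermQuery

variable {α : Type*} [DecidableEq α]

def PermQueryHolds (D : Finset (α × α)) : Prop :=
  ∃ a b, (a, b) ∈ D ∧ (b, a) ∈ D

def symmetricPairs (R : Finset (α × α)) : Finset (Sym2 α) :=
  (R.filter (fun t => (t.2, t.1) ∈ R)).image (Function.uncurry Sym2.mk)

theorem mem_symmetricPairs_mk {R : Finset (α × α)} {a b : α}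
    (hab : (a, b) ∈ R) (hba : (b, a) ∈ R) : s(a, b) ∈ symmetricPairs R :=
  mem_image_of_mem (Function.uncurry Sym2.mk) (mem_filter.2 ⟨hab, hba⟩)

theorem not_permQueryHolds_sdiff_iff {R Γ : Finset (α × α)} :
    ¬ PermQueryHolds (R \ Γ) ↔ symmetricPairs R ⊆ Γ.image (Function.uncurry Sym2.mk) := by
  constructor
  · intro hΓ s hs
    obtain ⟨⟨a, b⟩, hR, rfl⟩ := mem_image.1 hs
    obtain ⟨hab, hba⟩ := mem_filter.1 hR
    by_cases hΓab : (a, b) ∈ Γ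
    · exact mem_image_of_mem _ hΓab
    · have hΓba : (b, a) ∈ Γ := by
        by_contra hΓba
        exact hΓ ⟨a, b, mem_sdiff.2 ⟨hab, hΓab⟩, mem_sdiff.2 ⟨hba, hΓba⟩⟩
      rw [mem_image]
      exact ⟨(b, a), hΓba, Sym2.eq_swap⟩
  · rintro hsub ⟨a, b, hab, hba⟩
    rw [mem_sdiff] at hab hba
    obtain ⟨⟨c, d⟩, hΓ, hcd⟩ := mem_image.1 (hsub (mem_symmetricPairs_mk hab.1 hba.1))
    rcases (Sym2.mk_eq_mk_iff (p := (c, d)) (q := (a, b))).1 hcd with h | h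
    · exact hab.2 (h ▸ hΓ)
    · exact hba.2 (h ▸ hΓ : (a, b).swap ∈ Γ)

theorem card_symmetricPairs_le {R Γ : Finset (α × α)} (hΓ : ¬ PermQueryHolds (R \ Γ)) :
    #(symmetricPairs R) ≤ #Γ :=
  (card_le_card (not_permQueryHolds_sdiff_iff.1 hΓ)).trans card_image_le

theorem exists_contingency_card_eq (R : Finset (α × α)) :
    ∃ Γ ⊆ R, ¬ PermQueryHolds (R \ Γ) ∧ #Γ = #(symmetricPairs R) := by
  obtain ⟨Γ, hΓ, hinj, himage⟩ := exists_subset_injOn_image_eq_of_surjOn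
    (↑(R.filter fun t => (t.2, t.1) ∈ R)) (symmetricPairs R)
    (by rw [symmetricPairs, coe_image]; exact Set.surjOn_image _ _)
  refine ⟨Γ, fun t ht => (mem_filter.1 (hΓ ht)).1, ?_, ?_⟩
  · exact not_permQueryHolds_sdiff_iff.2 himage.ge
  · rw [← himage, card_image_of_injOn hinj]

end PermQuery

theorem stmt_14_general {α : Type} [DecidableEq α]
    (R : Finset (α × α)) :
    sInf {c : ℕ | ∃ Γ : Finset (α × α), Γ ⊆ R ∧
        (¬ ∃ a b, (a, b) ∈ R \ Γ ∧ (b, a) ∈ R \ Γ) ∧ Γ.card = c} =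
    ((R.filter (fun t => (t.2, t.1) ∈ R)).image (Function.uncurry Sym2.mk)).card := by
  refine IsLeast.csInf_eq ⟨exists_contingency_card_eq R, ?_⟩
  rintro c ⟨Γ, -, hΓ, rfl⟩
  exact card_symmetricPairs_le hΓ

theorem stmt_14 {α : Type} [DecidableEq α]
    (R : Finset (α × α))
    (hsat : ∃ a b, (a, b) ∈ R ∧ (b, a) ∈ R) :
    sInf {c : ℕ | ∃ Γ : Finset (α × α), Γ ⊆ R ∧
        (¬ ∃ a b, (a, b) ∈ R \ Γ ∧ (b, a) ∈ R \ Γ) ∧ Γ.card = c} =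
    ((R.filter (fun t => (t.2, t.1) ∈ R)).image (Function.uncurry Sym2.mk)).card :=
  stmt_14_general R
end

section
/- Consider the query q_perm^A ← A(x), R(x,y), R(y,x), with A unary and R binary, both endogenous. For every database D with D ⊨ q_perm^A, the resilience ρ(q_perm^A, D) equals the minimum size of a vertex cover of the bipartite graph whose left vertices are the elements a with A(a) ∈ D, whose right vertices are the unordered pairs {a,b} with both (a,b) ∈ R and (b,a) ∈ R, and which has an edge between a left vertex a and a right vertex p exactly when a ∈ p. -/
/-!
A contingency set `(ΓA, ΓR)` and a vertex cover `(CL, CR)` translate into each other without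
increasing the size. From `(ΓA, ΓR)` take `CL := ΓA` and for `CR` the unordered pairs of the
symmetric part of `R` one of whose orientations lies in `ΓR`. Conversely, from `(CL, CR)` take
`ΓA := CL` and for `ΓR` one chosen orientation of each pair in `CR`: every witness
`A(a), R(a,b), R(b,a)` meets the edge between `a` and `{a,b}`, and a deleted pair `{a,b}`
removes one of the two atoms `R(a,b)`, `R(b,a)`.
-/

open Finset

section

variable {α : Type} [DecidableEq α]

/-- The right vertices of the vertex-cover graph. -/
def symmPairs (R : Finset (α × α)) : Finset (Sym2 α) :=
  (R.filter (fun t => (t.2, t.1) ∈ R)).image Sym2.mk.uncurry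

theorem mk_mem_symmPairs {R : Finset (α × α)} {a b : α} :
    s(a, b) ∈ symmPairs R ↔ (a, b) ∈ R ∧ (b, a) ∈ R := by
  constructor
  · intro h
    obtain ⟨⟨x, y⟩, hxy, hmk⟩ := mem_image.1 h
    obtain ⟨hxyR, hyxR⟩ := mem_filter.1 hxy
    rcases Sym2.eq_iff.1 hmk with ⟨rfl, rfl⟩ | ⟨rfl, rfl⟩
    · exact ⟨hxyR, hyxR⟩
    · exact ⟨hyxR, hxyR⟩
  · rintro ⟨hab, hba⟩
    exact mem_image_of_mem _ (mem_filter.2 ⟨hab, hba⟩)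

theorem exists_vertexCover_of_contingency {A ΓA : Finset α} {R ΓR : Finset (α × α)}
    (hcont : ¬ ∃ a b, a ∈ A \ ΓA ∧ (a, b) ∈ R \ ΓR ∧ (b, a) ∈ R \ ΓR) :
    ∃ CR ⊆ symmPairs R, (∀ a ∈ A, ∀ p ∈ symmPairs R, a ∈ p → a ∈ ΓA ∨ p ∈ CR) ∧
      CR.card ≤ ΓR.card := by
  refine ⟨ΓR.image Sym2.mk.uncurry ∩ symmPairs R, inter_subset_right, ?_,
    (card_le_card inter_subset_left).trans card_image_le⟩
  intro a ha p hp hap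
  rw [or_iff_not_imp_left]
  intro haΓ
  obtain ⟨b, rfl⟩ : ∃ b, s(a, b) = p := ⟨_, Sym2.other_spec hap⟩
  obtain ⟨hab, hba⟩ := mk_mem_symmPairs.1 hp
  have hdel : (a, b) ∈ ΓR ∨ (b, a) ∈ ΓR := by
    by_contra! hkeep
    exact hcont ⟨a, b, mem_sdiff.2 ⟨ha, haΓ⟩, mem_sdiff.2 ⟨hab, hkeep.1⟩,
      mem_sdiff.2 ⟨hba, hkeep.2⟩⟩
  refine mem_inter.2 ⟨?_, hp⟩
  rcases hdel with h | h
  · exact mem_image_of_mem _ h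
  · rw [Sym2.eq_swap]
    exact mem_image_of_mem Sym2.mk.uncurry h

theorem exists_contingency_of_vertexCover {A CL : Finset α} {R : Finset (α × α)}
    {CR : Finset (Sym2 α)} (hCR : CR ⊆ symmPairs R)
    (hcov : ∀ a ∈ A, ∀ p ∈ symmPairs R, a ∈ p → a ∈ CL ∨ p ∈ CR) :
    ∃ ΓR ⊆ R, (¬ ∃ a b, a ∈ A \ CL ∧ (a, b) ∈ R \ ΓR ∧ (b, a) ∈ R \ ΓR) ∧
      ΓR.card ≤ CR.card := by
  have hout (p : Sym2 α) : s(p.out.1, p.out.2) = p := Quot.out_eq p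
  refine ⟨CR.image Quot.out, ?_, ?_, card_image_le⟩
  · intro t ht
    obtain ⟨p, hp, rfl⟩ := mem_image.1 ht
    have hpR := hCR hp
    rw [← hout p] at hpR
    exact (mk_mem_symmPairs.1 hpR).1
  · rintro ⟨a, b, ha, hab, hba⟩
    rw [mem_sdiff] at ha hab hba
    have hp : s(a, b) ∈ symmPairs R := mk_mem_symmPairs.2 ⟨hab.1, hba.1⟩
    rcases hcov a ha.1 _ hp (Sym2.mem_mk_left a b) with h | h
    · exact ha.2 h
    · have hdel : Quot.out s(a, b) ∈ CR.image Quot.out := mem_image_of_mem _ h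
      rcases (Sym2.mk_eq_mk_iff (q := (a, b))).1 (hout _) with heq | heq <;> rw [heq] at hdel
      · exact hab.2 hdel
      · exact hba.2 hdel

end

theorem stmt_15_general {α : Type} [DecidableEq α]
    (A : Finset α) (R : Finset (α × α)) :
    sInf {c : ℕ | ∃ (ΓA : Finset α) (ΓR : Finset (α × α)),
        ΓA ⊆ A ∧ ΓR ⊆ R ∧
        (¬ ∃ a b, a ∈ A \ ΓA ∧ (a, b) ∈ R \ ΓR ∧ (b, a) ∈ R \ ΓR) ∧
        ΓA.card + ΓR.card = c} =
    sInf {c : ℕ | ∃ (CL : Finset α) (CR : Finset (Sym2 α)),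
        CL ⊆ A ∧
        CR ⊆ (R.filter (fun t => (t.2, t.1) ∈ R)).image Sym2.mk.uncurry ∧
        (∀ a ∈ A, ∀ p ∈ (R.filter (fun t => (t.2, t.1) ∈ R)).image Sym2.mk.uncurry,
          a ∈ p → a ∈ CL ∨ p ∈ CR) ∧
        CL.card + CR.card = c} := by
  apply csInf_eq_csInf_of_forall_exists_le
  · rintro _ ⟨ΓA, ΓR, hΓA, -, hcont, rfl⟩
    obtain ⟨CR, hCR, hcov, hcard⟩ := exists_vertexCover_of_contingency hcont
    exact ⟨_, ⟨ΓA, CR, hΓA, hCR, hcov, rfl⟩, by omega⟩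
  · rintro _ ⟨CL, CR, hCL, hCR, hcov, rfl⟩
    obtain ⟨ΓR, hΓR, hcont, hcard⟩ := exists_contingency_of_vertexCover hCR hcov
    exact ⟨_, ⟨CL, ΓR, hCL, hΓR, hcont, rfl⟩, by omega⟩

theorem stmt_15 {α : Type} [DecidableEq α]
    (A : Finset α) (R : Finset (α × α))
    (hsat : ∃ a b, a ∈ A ∧ (a, b) ∈ R ∧ (b, a) ∈ R) :
    sInf {c : ℕ | ∃ (ΓA : Finset α) (ΓR : Finset (α × α)),
        ΓA ⊆ A ∧ ΓR ⊆ R ∧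
        (¬ ∃ a b, a ∈ A \ ΓA ∧ (a, b) ∈ R \ ΓR ∧ (b, a) ∈ R \ ΓR) ∧
        ΓA.card + ΓR.card = c} =
    sInf {c : ℕ | ∃ (CL : Finset α) (CR : Finset (Sym2 α)),
        CL ⊆ A ∧
        CR ⊆ (R.filter (fun t => (t.2, t.1) ∈ R)).image Sym2.mk.uncurry ∧
        (∀ a ∈ A, ∀ p ∈ (R.filter (fun t => (t.2, t.1) ∈ R)).image Sym2.mk.uncurry,
          a ∈ p → a ∈ CL ∨ p ∈ CR) ∧
        CL.card + CR.card = c} :=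
  stmt_15_general A R
end

section
/- Consider the query z_3 ← R(x,x), R(x,y), A(y), with R binary and A unary, both endogenous. For every database D with D ⊨ z_3, there exists a minimum-size contingency set for (z_3, D) containing no tuple R(a,b) with a ≠ b. -/
/-- Any contingency set can be transformed into one containing only diagonal
`R`-tuples, without increasing its total size. -/
lemma diag_transform {α : Type} [DecidableEq α]
    (R : Finset (α × α)) (A : Finset α)
    (ΓR' : Finset (α × α)) (ΓA' : Finset α)
    (hR' : ΓR' ⊆ R) (hA' : ΓA' ⊆ A)
    (hv : ¬ ∃ a b, (a, a) ∈ R \ ΓR' ∧ (a, b) ∈ R \ ΓR' ∧ b ∈ A \ ΓA') :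
    ∃ (ΓR : Finset (α × α)) (ΓA : Finset α), ΓR ⊆ R ∧ ΓA ⊆ A ∧
      (∀ t ∈ ΓR, t.1 = t.2) ∧
      (¬ ∃ a b, (a, a) ∈ R \ ΓR ∧ (a, b) ∈ R \ ΓR ∧ b ∈ A \ ΓA) ∧
      ΓR.card + ΓA.card ≤ ΓR'.card + ΓA'.card := by
  classical
  set ΓR : Finset (α × α) := ΓR'.filter (fun t => t.1 = t.2) with hΓR
  set X : Finset α :=
    ((ΓR'.filter (fun t => ¬ t.1 = t.2)).image Prod.snd) ∩ A with hX
  set ΓA : Finset α := ΓA' ∪ X with hΓA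
  refine ⟨ΓR, ΓA, ?_, ?_, ?_, ?_, ?_⟩
  · exact (Finset.filter_subset _ _).trans hR'
  · exact Finset.union_subset hA' (Finset.inter_subset_right)
  · intro t ht
    exact (Finset.mem_filter.mp ht).2
  · rintro ⟨a, b, haa, hab, hb⟩
    have haaR : (a, a) ∈ R := (Finset.mem_sdiff.mp haa).1
    have habR : (a, b) ∈ R := (Finset.mem_sdiff.mp hab).1
    have haaΓ : (a, a) ∉ ΓR' := by
      intro h
      exact (Finset.mem_sdiff.mp haa).2 (Finset.mem_filter.mpr ⟨h, rfl⟩)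
    have hbA : b ∈ A := (Finset.mem_sdiff.mp hb).1
    have hbΓ : b ∉ ΓA := (Finset.mem_sdiff.mp hb).2
    have hbA' : b ∉ ΓA' := fun h => hbΓ (Finset.mem_union_left _ h)
    by_cases hcase : (a, b) ∈ ΓR'
    · have hne : ¬ (a : α) = b := by
        intro h; subst h; exact haaΓ hcase
      apply hbΓ
      apply Finset.mem_union_right
      exact Finset.mem_inter.mpr
        ⟨Finset.mem_image.mpr ⟨(a, b), Finset.mem_filter.mpr ⟨hcase, hne⟩, rfl⟩, hbA⟩
    · exact hv ⟨a, b, Finset.mem_sdiff.mpr ⟨haaR, haaΓ⟩,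
        Finset.mem_sdiff.mpr ⟨habR, hcase⟩, Finset.mem_sdiff.mpr ⟨hbA, hbA'⟩⟩
  · have h1 : ΓA.card ≤ ΓA'.card + X.card := Finset.card_union_le _ _
    have h2 : X.card ≤ (ΓR'.filter (fun t => ¬ t.1 = t.2)).card :=
      le_trans (Finset.card_le_card Finset.inter_subset_left)
        (Finset.card_image_le)
    have h3 : ΓR.card + (ΓR'.filter (fun t => ¬ t.1 = t.2)).card = ΓR'.card :=
      Finset.card_filter_add_card_filter_not _
    omega

theorem stmt_17 {α : Type} [DecidableEq α]
    (R : Finset (α × α)) (A : Finset α)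
    (hsat : ∃ a b, (a, a) ∈ R ∧ (a, b) ∈ R ∧ b ∈ A) :
    ∃ (ΓR : Finset (α × α)) (ΓA : Finset α), ΓR ⊆ R ∧ ΓA ⊆ A ∧
      (∀ t ∈ ΓR, t.1 = t.2) ∧
      (¬ ∃ a b, (a, a) ∈ R \ ΓR ∧ (a, b) ∈ R \ ΓR ∧ b ∈ A \ ΓA) ∧
      ∀ (ΓR' : Finset (α × α)) (ΓA' : Finset α), ΓR' ⊆ R → ΓA' ⊆ A →
        (¬ ∃ a b, (a, a) ∈ R \ ΓR' ∧ (a, b) ∈ R \ ΓR' ∧ b ∈ A \ ΓA') →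
        ΓR.card + ΓA.card ≤ ΓR'.card + ΓA'.card := by
  classical
  set S : Set ℕ := {n | ∃ (ΓR : Finset (α × α)) (ΓA : Finset α),
      ΓR ⊆ R ∧ ΓA ⊆ A ∧ (∀ t ∈ ΓR, t.1 = t.2) ∧
      (¬ ∃ a b, (a, a) ∈ R \ ΓR ∧ (a, b) ∈ R \ ΓR ∧ b ∈ A \ ΓA) ∧
      n = ΓR.card + ΓA.card} with hS
  have hne : S.Nonempty := by
    refine ⟨(R.filter (fun t => t.1 = t.2)).card,
      R.filter (fun t => t.1 = t.2), ∅, Finset.filter_subset _ _,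
      Finset.empty_subset _, fun t ht => (Finset.mem_filter.mp ht).2, ?_, by simp⟩
    rintro ⟨a, b, haa, -, -⟩
    exact (Finset.mem_sdiff.mp haa).2
      (Finset.mem_filter.mpr ⟨(Finset.mem_sdiff.mp haa).1, rfl⟩)
  obtain ⟨ΓR, ΓA, h1, h2, h3, h4, h5⟩ := Nat.sInf_mem hne
  refine ⟨ΓR, ΓA, h1, h2, h3, h4, ?_⟩
  intro ΓR' ΓA' hR' hA' hv
  obtain ⟨ΓR'', ΓA'', g1, g2, g3, g4, g5⟩ := diag_transform R A ΓR' ΓA' hR' hA' hv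
  have : ΓR''.card + ΓA''.card ∈ S := ⟨ΓR'', ΓA'', g1, g2, g3, g4, rfl⟩
  have := Nat.sInf_le this
  omega
end

section
/- For every database D satisfying the triangle query q_△ ← R(x,y), S(y,z), T(z,x) (R, S, T binary, all endogenous), there exists a database D' satisfying the tripod query q_T ← A(x), B(y), C(z), W(x,y,z) (A, B, C unary, W ternary, all endogenous) such that for every integer k, (q_△, D) has a contingency set of size at most k if and only if (q_T, D') has a contingency set of size at most k. -/
/-!
STATEMENT 18.
For every database `(Rt, St, Tt)` satisfying the triangle query
`q_△ ← R(x,y), S(y,z), T(z,x)` (all binary, endogenous), there is a database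
`(A, B, C, W)` satisfying the tripod query `q_T ← A(x), B(y), C(z), W(x,y,z)`
(`A`, `B`, `C` unary, `W` ternary, all endogenous) such that for every `k`,
`(q_△, D)` has a contingency set of size at most `k` iff `(q_T, D')` does.
-/
theorem stmt_18 {γ : Type} [DecidableEq γ]
    (Rt St Tt : Finset (γ × γ))
    (hsat : ∃ x y z : γ, (x, y) ∈ Rt ∧ (y, z) ∈ St ∧ (z, x) ∈ Tt) :
    ∃ (β : Type) (A B C : Finset β) (W : Finset (β × β × β)),
      (∃ x y z : β, x ∈ A ∧ y ∈ B ∧ z ∈ C ∧ (x, y, z) ∈ W) ∧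
      ∀ k : ℕ,
        (∃ ΓR ΓS ΓT : Finset (γ × γ), ΓR ⊆ Rt ∧ ΓS ⊆ St ∧ ΓT ⊆ Tt ∧
          ΓR.card + ΓS.card + ΓT.card ≤ k ∧
          ¬ ∃ x y z : γ, (x, y) ∈ Rt \ ΓR ∧ (y, z) ∈ St \ ΓS ∧ (z, x) ∈ Tt \ ΓT) ↔
        (∃ (ΓA ΓB ΓC : Finset β) (ΓW : Finset (β × β × β)),
          ΓA ⊆ A ∧ ΓB ⊆ B ∧ ΓC ⊆ C ∧ ΓW ⊆ W ∧
          ΓA.card + ΓB.card + ΓC.card + ΓW.card ≤ k ∧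
          ¬ ∃ x y z : β, (x ∈ A ∧ x ∉ ΓA) ∧ (y ∈ B ∧ y ∉ ΓB) ∧ (z ∈ C ∧ z ∉ ΓC) ∧
            ((x, y, z) ∈ W ∧ (x, y, z) ∉ ΓW)) := by
  classical
  refine ⟨γ × γ, Rt, St, Tt,
    (Rt ×ˢ St ×ˢ Tt).filter
      (fun p => p.1.2 = p.2.1.1 ∧ p.2.1.2 = p.2.2.1 ∧ p.2.2.2 = p.1.1), ?_, ?_⟩
  · obtain ⟨x, y, z, hR, hS, hT⟩ := hsat
    exact ⟨(x, y), (y, z), (z, x), hR, hS, hT, by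
      simp [Finset.mem_filter, Finset.mem_product, hR, hS, hT]⟩
  · intro k
    constructor
    · rintro ⟨ΓR, ΓS, ΓT, hRs, hSs, hTs, hcard, hno⟩
      refine ⟨ΓR, ΓS, ΓT, ∅, hRs, hSs, hTs, Finset.empty_subset _, by simpa using hcard, ?_⟩
      rintro ⟨r, s, t, ⟨hrA, hrΓ⟩, ⟨hsB, hsΓ⟩, ⟨htC, htΓ⟩, hW, -⟩
      rw [Finset.mem_filter] at hW
      obtain ⟨-, h1, h2, h3⟩ := hW
      apply hno
      refine ⟨r.1, r.2, s.2, ?_, ?_, ?_⟩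
      · simpa [Finset.mem_sdiff] using ⟨hrA, hrΓ⟩
      · rw [Finset.mem_sdiff]
        constructor
        · have : s = (r.2, s.2) := by
            cases s; simp_all
          rw [← this]; exact hsB
        · have : s = (r.2, s.2) := by cases s; simp_all
          rw [← this]; exact hsΓ
      · have ht' : t = (s.2, r.1) := by
          cases t; simp_all
        rw [Finset.mem_sdiff, ← ht']
        exact ⟨htC, htΓ⟩
    · rintro ⟨ΓA, ΓB, ΓC, ΓW, hAs, hBs, hCs, hWs, hcard, hno⟩
      refine ⟨ΓA ∪ ΓW.image Prod.fst, ΓB, ΓC, ?_, hBs, hCs, ?_, ?_⟩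
      · apply Finset.union_subset hAs
        intro r hr
        obtain ⟨p, hp, rfl⟩ := Finset.mem_image.mp hr
        have := hWs hp
        rw [Finset.mem_filter, Finset.mem_product] at this
        exact this.1.1
      · calc (ΓA ∪ ΓW.image Prod.fst).card + ΓB.card + ΓC.card
            ≤ (ΓA.card + (ΓW.image Prod.fst).card) + ΓB.card + ΓC.card := by
              gcongr; exact Finset.card_union_le _ _
          _ ≤ (ΓA.card + ΓW.card) + ΓB.card + ΓC.card := by
              gcongr; exact Finset.card_image_le
          _ ≤ k := by omega
      · rintro ⟨x, y, z, hxy, hyz, hzx⟩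
        rw [Finset.mem_sdiff] at hxy hyz hzx
        apply hno
        refine ⟨(x, y), (y, z), (z, x),
          ⟨hxy.1, fun h => hxy.2 (Finset.mem_union_left _ h)⟩,
          ⟨hyz.1, hyz.2⟩, ⟨hzx.1, hzx.2⟩, ?_, ?_⟩
        · simp [Finset.mem_filter, Finset.mem_product, hxy.1, hyz.1, hzx.1]
        · intro h
          exact hxy.2 (Finset.mem_union_right _
            (Finset.mem_image.mpr ⟨_, h, rfl⟩))
end
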